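/- If G is a graph without isolated vertices, then χ'_CF(G) ≤ 2⌈log₂ χ(G)⌉ + 1. -/

import Mathlib

open SimpleGraph

variable {V : Type*}

/-- The closed edge-neighborhood of an edge `uv`: all edges incident to `u` or `v`. -/
def edgeNbhd (G : SimpleGraph V) (u v : V) : Set (Sym2 V) :=
  G.incidenceSet u ∪ G.incidenceSet v

/-- An edge `uv` is satisfied by a partial edge coloring `φ` if some color appears
exactly once among the colored edges incident to `u` or `v`. -/
def Satisfied (G : SimpleGraph V) (φ : Sym2 V → Option ℕ) (u v : V) : Prop :=
  ∃ c : ℕ, {e | e ∈ edgeNbhd G u v ∧ φ e = some c}.ncard = 1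

/-- A partial edge coloring of `G` with `k` colors such that every edge of `G` is satisfied. -/
def IsPartialSCF (G : SimpleGraph V) (k : ℕ) (φ : Sym2 V → Option ℕ) : Prop :=
  (∀ e c, φ e = some c → e ∈ G.edgeSet ∧ c < k) ∧
  ∀ ⦃u v⦄, G.Adj u v → Satisfied G φ u v

/-- `χ'_sCF(G)`. -/
noncomputable def sCFIndex (G : SimpleGraph V) : ℕ :=
  sInf {k | ∃ φ, IsPartialSCF G k φ}

/-- A (total) conflict-free edge coloring of `G` with `k` colors. -/
def IsCF (G : SimpleGraph V) (k : ℕ) (φ : Sym2 V → ℕ) : Prop :=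
  (∀ e ∈ G.edgeSet, φ e < k) ∧
  ∀ ⦃u v⦄, G.Adj u v → ∃ c : ℕ, {e | e ∈ edgeNbhd G u v ∧ φ e = c}.ncard = 1

/-- `χ'_CF(G)`, the conflict-free chromatic index. -/
noncomputable def cfIndex (G : SimpleGraph V) : ℕ :=
  sInf {k | ∃ φ, IsCF G k φ}

/-- The neighborhood of a set of vertices. -/
def NbhdSet (G : SimpleGraph V) (S : Set V) : Set V :=
  ⋃ x ∈ S, G.neighborSet x

/-- The set of private neighbors of `x` with respect to `D`. -/
def privNbrs (G : SimpleGraph V) (D : Set V) (x : V) : Set V :=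
  {y ∈ G.neighborSet x | G.neighborSet y ∩ D = {x}}

/-- The number of edges of `F` incident to `v`. -/
noncomputable def edegOn (F : Set (Sym2 V)) (v : V) : ℕ :=
  {e ∈ F | v ∈ e}.ncard

/-!
Colour `G` properly with `n ≤ 2 ^ t` colours, read as `t`-bit numbers, and put the edge `uv` on
level `i`, the highest bit in which the colours of `u` and `v` differ. Bit `i` splits the edges of
level `i` into a bipartite graph, so it suffices to colour a bipartite graph with two colours plus
"uncoloured" such that every edge sees some colour exactly once: then level `i` uses colours
`2i, 2i + 1`, and all uncoloured edges get the extra colour `2t`.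

For a bipartite graph with sides `A` and `B`, take an inclusion-minimal `D ⊆ B` dominating the
non-isolated vertices of `A`. By minimality every `x ∈ D` has a private neighbour `p x ∈ A`; colour
the edges `p x — x` with `0`. Every non-isolated `a ∈ A` not of the form `p x` sends one edge to
`D`, coloured `1`. An edge `uv` with `u ∈ A` sees exactly one `0`-edge if `v ∈ D` or `u = p x`, and
exactly one `1`-edge otherwise.
-/

lemma mem_edgeNbhd {G : SimpleGraph V} {u v : V} {e : Sym2 V} :
    e ∈ edgeNbhd G u v ↔ e ∈ G.edgeSet ∧ (u ∈ e ∨ v ∈ e) := by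
  simp only [edgeNbhd, Set.mem_union, incidenceSet, Set.mem_ofPred_eq]
  tauto

lemma mem_privNbrs {G : SimpleGraph V} {D : Set V} {x y : V} (hx : x ∈ D) :
    y ∈ privNbrs G D x ↔ G.Adj x y ∧ ∀ x' ∈ D, G.Adj y x' → x' = x := by
  simp only [privNbrs, Set.mem_ofPred_eq, mem_neighborSet, Set.eq_singleton_iff_unique_mem,
    Set.mem_inter_iff]
  constructor
  · rintro ⟨hxy, -, huniq⟩
    exact ⟨hxy, fun x' hx' hyx' => huniq x' ⟨hyx', hx'⟩⟩
  · rintro ⟨hxy, huniq⟩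
    exact ⟨hxy, ⟨hxy.symm, hx⟩, fun x' ⟨hyx', hx'⟩ => huniq x' hx' hyx'⟩

lemma SimpleGraph.Coloring.eq_not_of_adj {H : SimpleGraph V} (C : H.Coloring Bool) {x y : V}
    (h : H.Adj x y) : C y = !C x :=
  Bool.eq_not_of_ne (C.valid h).symm

lemma mem_or_mem_iff_of_sides (f : V → Bool) {a b u v : V} (ha : f a = false) (hb : f b = true)
    (hu : f u = false) (hv : f v = true) : u ∈ s(a, b) ∨ v ∈ s(a, b) ↔ u = a ∨ v = b := by
  simp only [Sym2.mem_iff]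
  constructor
  · rintro ((rfl | rfl) | (rfl | rfl)) <;> simp_all
  · rintro (rfl | rfl) <;> simp

lemma ncard_incident_image_eq_one {α : Type*} (f : V → Bool) {S : Set α} {g h : α → V}
    (hg : ∀ s ∈ S, f (g s) = false) (hh : ∀ s ∈ S, f (h s) = true) {u v : V}
    (hu : f u = false) (hv : f v = true) {s₀ : α} (hs₀ : s₀ ∈ S) (hinc : u = g s₀ ∨ v = h s₀)
    (huniq : ∀ s ∈ S, u = g s ∨ v = h s → s = s₀) :
    {e ∈ (fun s => s(g s, h s)) '' S | u ∈ e ∨ v ∈ e}.ncard = 1 := by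
  refine Set.ncard_eq_one.2 ⟨s(g s₀, h s₀), Set.ext fun e => ⟨?_, ?_⟩⟩
  · rintro ⟨⟨s, hs, rfl⟩, he⟩
    rw [mem_or_mem_iff_of_sides f (hg s hs) (hh s hs) hu hv] at he
    rw [huniq s hs he]
    rfl
  · rintro rfl
    exact ⟨⟨s₀, hs₀, rfl⟩, (mem_or_mem_iff_of_sides f (hg s₀ hs₀) (hh s₀ hs₀) hu hv).2 hinc⟩

section Bipartite

variable {H : SimpleGraph V} (C : H.Coloring Bool)

lemma exists_dominating_privNbrs_nonempty [Finite V] :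
    ∃ D : Set V, (∀ x ∈ D, C x = true) ∧ (∀ a y, C a = false → H.Adj a y → ∃ x ∈ D, H.Adj a x) ∧
      ∀ x ∈ D, (privNbrs H D x).Nonempty := by
  obtain ⟨D, ⟨hDtrue, hdom⟩, hmin⟩ := exists_minimal_of_wellFoundedLT
    (fun D : Set V => (∀ x ∈ D, C x = true) ∧
      ∀ a y, C a = false → H.Adj a y → ∃ x ∈ D, H.Adj a x)
    ⟨{x | C x = true}, fun _ hx => hx, fun a y ha hay => ⟨y, by simp [C.eq_not_of_adj hay, ha], hay⟩⟩
  refine ⟨D, hDtrue, hdom, fun x hx => ?_⟩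
  by_contra hempty
  have hnotpriv : ∀ a, H.Adj x a → ∃ x' ∈ D, H.Adj a x' ∧ x' ≠ x := by
    intro a hxa
    by_contra! h
    exact hempty ⟨a, (mem_privNbrs hx).2 ⟨hxa, h⟩⟩
  suffices D ≤ D \ {x} from (this hx).2 rfl
  refine hmin ⟨fun y hy => hDtrue y hy.1, fun a y ha hay => ?_⟩ Set.sdiff_subset
  obtain ⟨x₁, hx₁, hax₁⟩ := hdom a y ha hay
  by_cases h : x₁ = x
  · obtain ⟨x', hx', hax', hne⟩ := hnotpriv a (h ▸ hax₁.symm)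
    exact ⟨x', ⟨hx', hne⟩, hax'⟩
  · exact ⟨x₁, ⟨hx₁, h⟩, hax₁⟩

lemma exists_edgeSets_of_dominating (D : Set V) (hDtrue : ∀ x ∈ D, C x = true)
    (hdom : ∀ a y, C a = false → H.Adj a y → ∃ x ∈ D, H.Adj a x)
    (hpriv : ∀ x ∈ D, (privNbrs H D x).Nonempty) :
    ∃ F₀ F₁ : Set (Sym2 V), F₀ ⊆ H.edgeSet ∧ F₁ ⊆ H.edgeSet ∧ Disjoint F₀ F₁ ∧
      ∀ ⦃u v⦄, H.Adj u v →
        {e ∈ F₀ | u ∈ e ∨ v ∈ e}.ncard = 1 ∨ {e ∈ F₁ | u ∈ e ∨ v ∈ e}.ncard = 1 := by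
  choose! p hp using hpriv
  replace hp : ∀ x ∈ D, H.Adj x (p x) ∧ ∀ x' ∈ D, H.Adj (p x) x' → x' = x :=
    fun x hx => (mem_privNbrs hx).1 (hp x hx)
  have hpside : ∀ x ∈ D, C (p x) = false := fun x hx => by
    simp [C.eq_not_of_adj (hp x hx).1, hDtrue x hx]
  set A := {a | C a = false ∧ (∃ y, H.Adj a y) ∧ a ∉ p '' D}
  choose! q hq using fun a (ha : a ∈ A) => hdom a ha.2.1.choose ha.1 ha.2.1.choose_spec
  refine ⟨(fun x => s(p x, x)) '' D, (fun a => s(a, q a)) '' A, ?_, ?_, ?_, ?_⟩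
  · rintro _ ⟨x, hx, rfl⟩
    exact (hp x hx).1.symm
  · rintro _ ⟨a, ha, rfl⟩
    exact (hq a ha).2
  · refine Set.disjoint_left.2 ?_
    rintro _ ⟨x, hx, rfl⟩ ⟨a, ha, he⟩
    obtain ⟨haf, -, hap⟩ := ha
    rcases Sym2.eq_iff.1 he with ⟨h, -⟩ | ⟨h, -⟩
    · exact hap ⟨x, hx, h.symm⟩
    · simp [h, hDtrue x hx] at haf
  intro u v huv
  wlog hu : C u = false generalizing u v
  · have hswap : ∀ F : Set (Sym2 V), {e ∈ F | v ∈ e ∨ u ∈ e} = {e ∈ F | u ∈ e ∨ v ∈ e} :=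
      fun F => Set.ext fun e => and_congr_right fun _ => Or.comm
    rw [← hswap, ← hswap]
    exact this huv.symm (by simpa [C.eq_not_of_adj huv] using hu)
  have hv : C v = true := by simp [C.eq_not_of_adj huv, hu]
  by_cases hvD : v ∈ D
  · left
    refine ncard_incident_image_eq_one C hpside hDtrue hu hv hvD (Or.inr rfl) ?_
    rintro x hx (rfl | rfl)
    · exact ((hp x hx).2 v hvD huv).symm
    · rfl
  by_cases huD : u ∈ p '' D
  · left
    obtain ⟨x₀, hx₀, rfl⟩ := huD
    refine ncard_incident_image_eq_one C hpside hDtrue hu hv hx₀ (Or.inl rfl) ?_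
    rintro x hx (hpx | rfl)
    · exact (hp x₀ hx₀).2 x hx (hpx ▸ (hp x hx).1.symm)
    · exact absurd hx hvD
  · right
    refine ncard_incident_image_eq_one C (fun a ha => ha.1) (fun a ha => hDtrue _ (hq a ha).1)
      hu hv (s₀ := u) ⟨hu, ⟨v, huv⟩, huD⟩ (Or.inl rfl) ?_
    rintro a ha (rfl | hqa)
    · rfl
    · exact absurd (hqa ▸ (hq a ha).1) hvD

end Bipartite

theorem exists_isPartialSCF_two_of_isBipartite [Finite V] {H : SimpleGraph V}
    (hH : H.IsBipartite) : ∃ ψ, IsPartialSCF H 2 ψ := by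
  classical
  let C : H.Coloring Bool := hH.toColoring (by simp)
  obtain ⟨D, hDtrue, hdom, hpriv⟩ := exists_dominating_privNbrs_nonempty C
  obtain ⟨F₀, F₁, hF₀, hF₁, hdisj, huniq⟩ := exists_edgeSets_of_dominating C D hDtrue hdom hpriv
  let ψ : Sym2 V → Option ℕ := fun e => if e ∈ F₀ then some 0 else if e ∈ F₁ then some 1 else none
  have hψ₀ : ∀ e, ψ e = some 0 ↔ e ∈ F₀ := fun e => by
    by_cases h₀ : e ∈ F₀ <;> by_cases h₁ : e ∈ F₁ <;> simp [ψ, h₀, h₁]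
  have hψ₁ : ∀ e, ψ e = some 1 ↔ e ∈ F₁ := fun e => by
    by_cases h₀ : e ∈ F₀
    · simp [ψ, h₀, hdisj.notMem_of_mem_left h₀]
    · by_cases h₁ : e ∈ F₁ <;> simp [ψ, h₀, h₁]
  refine ⟨ψ, fun e c he => ?_, fun u v huv => ?_⟩
  · by_cases h₀ : e ∈ F₀
    · simp only [ψ, h₀, if_true, Option.some.injEq] at he
      exact ⟨hF₀ h₀, by omega⟩
    · by_cases h₁ : e ∈ F₁ <;> simp [ψ, h₀, h₁] at he
      exact ⟨hF₁ h₁, by omega⟩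
  · rcases huniq huv with h | h
    · refine ⟨0, Eq.trans (congrArg Set.ncard (Set.ext fun e => ?_)) h⟩
      simp only [Set.mem_ofPred_eq, mem_edgeNbhd, hψ₀]
      exact ⟨fun ⟨⟨_, hinc⟩, he⟩ => ⟨he, hinc⟩, fun ⟨he, hinc⟩ => ⟨⟨hF₀ he, hinc⟩, he⟩⟩
    · refine ⟨1, Eq.trans (congrArg Set.ncard (Set.ext fun e => ?_)) h⟩
      simp only [Set.mem_ofPred_eq, mem_edgeNbhd, hψ₁]
      exact ⟨fun ⟨⟨_, hinc⟩, he⟩ => ⟨he, hinc⟩, fun ⟨he, hinc⟩ => ⟨⟨hF₁ he, hinc⟩, he⟩⟩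

def levelGraph (G : SimpleGraph V) (lvl : Sym2 V → ℕ) (i : ℕ) : SimpleGraph V :=
  G.deleteEdges {e | lvl e ≠ i}

lemma mem_edgeSet_levelGraph {G : SimpleGraph V} {lvl : Sym2 V → ℕ} {i : ℕ} {e : Sym2 V} :
    e ∈ (levelGraph G lvl i).edgeSet ↔ e ∈ G.edgeSet ∧ lvl e = i := by
  simp [levelGraph, edgeSet_deleteEdges]

def levelColoring (t : ℕ) (lvl : Sym2 V → ℕ) (ψ : ℕ → Sym2 V → Option ℕ) (e : Sym2 V) : ℕ :=
  (ψ (lvl e) e).elim (2 * t) (2 * lvl e + ·)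

section LevelColoring

variable {G : SimpleGraph V} {t : ℕ} {lvl : Sym2 V → ℕ} {ψ : ℕ → Sym2 V → Option ℕ}
  (hψ : ∀ i, IsPartialSCF (levelGraph G lvl i) 2 (ψ i))
include hψ

lemma levelColoring_lt (hlvl : ∀ e ∈ G.edgeSet, lvl e < t) {e : Sym2 V} (he : e ∈ G.edgeSet) :
    levelColoring t lvl ψ e < 2 * t + 1 := by
  have := hlvl e he
  cases hψe : ψ (lvl e) e with
  | none => simp [levelColoring, hψe]
  | some c =>
    have := ((hψ _).1 e c hψe).2
    simp only [levelColoring, hψe, Option.elim_some]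
    omega

lemma levelColoring_eq_iff {e : Sym2 V} {i c : ℕ} (hi : i < t) (hc : c < 2) :
    levelColoring t lvl ψ e = 2 * i + c ↔ ψ i e = some c := by
  constructor
  · intro h
    cases hψe : ψ (lvl e) e with
    | none => simp only [levelColoring, hψe, Option.elim_none] at h; omega
    | some c' =>
      have := ((hψ _).1 e c' hψe).2
      simp only [levelColoring, hψe, Option.elim_some] at h
      obtain ⟨rfl, rfl⟩ : lvl e = i ∧ c' = c := by omega
      exact hψe
  · intro h
    obtain ⟨-, rfl⟩ := mem_edgeSet_levelGraph.1 ((hψ i).1 e c h).1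
    simp [levelColoring, h]

theorem isCF_levelColoring (hlvl : ∀ e ∈ G.edgeSet, lvl e < t) :
    IsCF G (2 * t + 1) (levelColoring t lvl ψ) := by
  refine ⟨fun e he => levelColoring_lt hψ hlvl he, fun u v huv => ?_⟩
  set i := lvl s(u, v)
  have hi : i < t := hlvl _ huv
  have huvi : (levelGraph G lvl i).Adj u v := by simp [levelGraph, huv, i]
  obtain ⟨c, hc⟩ := (hψ i).2 huvi
  obtain ⟨e₀, he₀⟩ := Set.ncard_eq_one.1 hc
  have hc2 : c < 2 := ((hψ i).1 e₀ c (he₀.symm ▸ Set.mem_singleton e₀).2).2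
  refine ⟨2 * i + c, Eq.trans (congrArg Set.ncard (Set.ext fun e => ?_)) hc⟩
  simp only [Set.mem_ofPred_eq, mem_edgeNbhd, mem_edgeSet_levelGraph,
    levelColoring_eq_iff hψ hi hc2]
  constructor
  · rintro ⟨⟨-, hinc⟩, h⟩
    exact ⟨⟨mem_edgeSet_levelGraph.1 ((hψ i).1 e c h).1, hinc⟩, h⟩
  · rintro ⟨⟨⟨he, -⟩, hinc⟩, h⟩
    exact ⟨⟨he, hinc⟩, h⟩

end LevelColoring

def xorLevel (c : V → ℕ) : Sym2 V → ℕ :=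
  Sym2.lift ⟨fun u v => (c u ^^^ c v).log2, fun u v => by dsimp only; rw [Nat.xor_comm]⟩

lemma xorLevel_lt {G : SimpleGraph V} (C : G.Coloring ℕ) {t : ℕ} (hC : ∀ v, C v < 2 ^ t) :
    ∀ e ∈ G.edgeSet, xorLevel C e < t := by
  intro e he
  induction e using Sym2.ind with
  | _ u v =>
    have hne : C u ^^^ C v ≠ 0 := fun h => C.valid he (xor_eq_zero_iff.1 h)
    exact (Nat.log2_lt hne).2 (Nat.xor_lt_two_pow (hC u) (hC v))

lemma isBipartite_levelGraph_xorLevel {G : SimpleGraph V} (C : G.Coloring ℕ) (i : ℕ) :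
    (levelGraph G (xorLevel C) i).IsBipartite := by
  refine (Coloring.mk (fun v => (C v).testBit i) fun {u v} huv => ?_).colorable
  obtain ⟨hadj, hi⟩ : G.Adj u v ∧ xorLevel C s(u, v) = i := by simpa [levelGraph] using huv
  have hbit := Nat.testBit_log2 fun h => C.valid hadj (xor_eq_zero_iff.1 h)
  rw [show (C u ^^^ C v).log2 = i from hi, Nat.testBit_xor] at hbit
  simpa using hbit

theorem cfIndex_le_of_colorable [Finite V] {G : SimpleGraph V} {n : ℕ} (hG : G.Colorable n) :
    cfIndex G ≤ 2 * Nat.clog 2 n + 1 := by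
  obtain ⟨C, hC⟩ := (colorable_iff_exists_bdd_nat_coloring n).1 hG
  choose ψ hψ using fun i =>
    exists_isPartialSCF_two_of_isBipartite (isBipartite_levelGraph_xorLevel C i)
  exact Nat.sInf_le ⟨_, isCF_levelColoring hψ
    (xorLevel_lt C fun v => (hC v).trans_le (Nat.le_pow_clog one_lt_two n))⟩

theorem stmt_8_general [Fintype V] (G : SimpleGraph V) :
    cfIndex G ≤ 2 * Nat.clog 2 G.chromaticNumber.toNat + 1 :=
  cfIndex_le_of_colorable G.colorable_chromaticNumber_of_fintype

theorem stmt_8 [Fintype V] (G : SimpleGraph V)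
    (hiso : ∀ v : V, ∃ u, G.Adj v u) (hchi : 2 ≤ G.chromaticNumber) :
    cfIndex G ≤ 2 * Nat.clog 2 G.chromaticNumber.toNat + 1 :=
  stmt_8_general G
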